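/- Let G = N ⋊ ⟨ξ⟩ be a semidirect product of a group N with an infinite cyclic group generated by ξ, let M be a trivial G-module, and let ρ ∈ Z¹(ℤ, H²(N,M)) be determined by ρ₁ = [μ] with ρ_{m+n} = ρ_m + ξⁿ_* ρ_n. Then the function ω : G³ → M defined by ω(n₁ξ^{l₁}, n₂ξ^{l₂}, n₃ξ^{l₃}) = -ρ_{l₁}(ξ^{l₁}(n₂), ξ^{l₁+l₂}(n₃)) is a 3-cocycle on G with values in M. -/

import Mathlib

/-- The inhomogeneous 3-cocycle identity for a trivial `G`-module `M`. -/
def IsCocycle3 {G M : Type*} [Group G] [AddCommGroup M] (ω : G → G → G → M) : Prop :=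
  ∀ g h k l : G,
    ω h k l + ω g (h * k) l + ω g h k = ω (g * h) k l + ω g h (k * l)

/-! Putting `m = 0` in the twisted relation shows `ρ 0 = 0` and that `ρ n` is fixed by `ξ⁻ⁿ`; the
relation then says that `l ↦ ρ l` is additive, so `ρ n = n • ρ 1` and every `ρ n` is fixed by the
whole of `⟨ξ⟩`. With `A = ξ^{l₁}(n₂)`, `B = ξ^{l₁+l₂}(n₃)`, `C = ξ^{l₁+l₂+l₃}(n₄)`, the 3-cocycle
identity for `ω` becomes the 2-cocycle identity of `ρ_{l₁}` on `A, B, C`, plus the additivity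
`ρ_{l₁+l₂} = ρ_{l₁} + ρ_{l₂}`. -/

open Multiplicative

lemma MulAut.apply_zpow_invariant {N M : Type*} [Group N] {σ : MulAut N} {f : N → N → M}
    (hf : ∀ a b, f (σ a) (σ b) = f a b) (k : ℤ) (a b : N) :
    f ((σ ^ k) a) ((σ ^ k) b) = f a b := by
  induction k using Int.induction_on generalizing a b with
  | zero => rfl
  | succ k ih => rw [zpow_add_one, MulAut.mul_apply, MulAut.mul_apply, ih, hf]
  | pred k ih =>
    rw [zpow_sub_one, MulAut.mul_apply, MulAut.mul_apply, ih, ← hf (σ⁻¹ a),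
      MulAut.apply_inv_self, MulAut.apply_inv_self]

section TwistedCocycle

variable {N M : Type*} [Group N] [AddCommGroup M] {φ : Multiplicative ℤ →* MulAut N}
  {ρ : ℤ → N → N → M}

def IsTwistedCocycle (φ : Multiplicative ℤ →* MulAut N) (ρ : ℤ → N → N → M) : Prop :=
  ∀ (m n : ℤ) (a b : N),
    ρ (m + n) a b = ρ m a b + ρ n (φ (ofAdd (-n)) a) (φ (ofAdd (-n)) b)

namespace IsTwistedCocycle

lemma apply_zero (h : IsTwistedCocycle φ ρ) (a b : N) : ρ 0 a b = 0 := by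
  simpa using h 0 0 a b

lemma apply_neg_invariant (h : IsTwistedCocycle φ ρ) (n : ℤ) (a b : N) :
    ρ n (φ (ofAdd (-n)) a) (φ (ofAdd (-n)) b) = ρ n a b := by
  simpa [h.apply_zero] using (h 0 n a b).symm

lemma add (h : IsTwistedCocycle φ ρ) (m n : ℤ) (a b : N) :
    ρ (m + n) a b = ρ m a b + ρ n a b := by
  rw [h m n, h.apply_neg_invariant]

lemma eq_zsmul (h : IsTwistedCocycle φ ρ) (n : ℤ) (a b : N) : ρ n a b = n • ρ 1 a b := by
  simpa only [AddMonoidHom.mk'_apply, smul_eq_mul, mul_one] using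
    (AddMonoidHom.mk' (fun n => ρ n a b) fun m n => h.add m n a b).map_zsmul n 1

lemma invariant (h : IsTwistedCocycle φ ρ) (n : ℤ) (g : Multiplicative ℤ) (a b : N) :
    ρ n (φ g a) (φ g b) = ρ n a b := by
  have hg : φ g = φ (ofAdd (-1)) ^ (-toAdd g) := by
    rw [← map_zpow, ← ofAdd_zsmul, smul_neg, smul_eq_mul, mul_one, neg_neg, ofAdd_toAdd]
  rw [h.eq_zsmul n, h.eq_zsmul n, hg,
    MulAut.apply_zpow_invariant (fun a b => h.apply_neg_invariant 1 a b)]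

end IsTwistedCocycle

lemma isCocycle3_of_add_of_invariant
    (hcocy : ∀ (l : ℤ) (a b c : N), ρ l b c + ρ l a (b * c) = ρ l (a * b) c + ρ l a b)
    (hadd : ∀ (m n : ℤ) (a b : N), ρ (m + n) a b = ρ m a b + ρ n a b)
    (hinv : ∀ (n : ℤ) (g : Multiplicative ℤ) (a b : N), ρ n (φ g a) (φ g b) = ρ n a b) :
    IsCocycle3 (G := SemidirectProduct N (Multiplicative ℤ) φ) (M := M)
      (fun g₁ g₂ g₃ => - ρ (toAdd g₁.right) (φ g₁.right g₂.left)
        (φ (g₁.right * g₂.right) g₃.left)) := by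
  rintro ⟨a, s⟩ ⟨b, t⟩ ⟨c, u⟩ ⟨d, v⟩
  simp only [SemidirectProduct.mul_left, SemidirectProduct.mul_right, map_mul,
    MulAut.mul_apply, toAdd_mul]
  rw [← hinv (toAdd t) s (φ t c), hadd]
  have := hcocy (toAdd s) (φ s b) (φ s (φ t c)) (φ s (φ t (φ u d)))
  linear_combination (norm := abel) this

end TwistedCocycle

/-- let `G = N ⋊ ⟨ξ⟩` with `⟨ξ⟩ ≅ ℤ`, `M` a trivial `G`-module, and let
`ρ : ℤ → Z²(N, M)` be a cochain-level 1-cocycle: each `ρ_l` is a 2-cocycle on `N`, and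
`ρ_{m+n} = ρ_m + ξⁿ₊ρ_n`, where `(ξⁿ₊μ)(a,b) = μ(ξ⁻ⁿ(a), ξ⁻ⁿ(b))` (with
`ξ(n) = ξ n ξ⁻¹`).  Then `ω(n₁ξ^{l₁}, n₂ξ^{l₂}, n₃ξ^{l₃}) = -ρ_{l₁}(ξ^{l₁}(n₂), ξ^{l₁+l₂}(n₃))`
is a 3-cocycle on `G` with values in `M`. -/
theorem stmt_17 (N : Type*) [Group N] (M : Type*) [AddCommGroup M]
    (φ : Multiplicative ℤ →* MulAut N)
    (ρ : ℤ → N → N → M)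
    (hcocy : ∀ (l : ℤ) (a b c : N),
      ρ l b c + ρ l a (b * c) = ρ l (a * b) c + ρ l a b)
    (hrel : ∀ (m n : ℤ) (a b : N),
      ρ (m + n) a b =
        ρ m a b +
          ρ n (φ (Multiplicative.ofAdd (-n)) a) (φ (Multiplicative.ofAdd (-n)) b)) :
    IsCocycle3 (G := SemidirectProduct N (Multiplicative ℤ) φ) (M := M)
      (fun g₁ g₂ g₃ =>
        - ρ (Multiplicative.toAdd g₁.right)
            (φ g₁.right g₂.left)
            (φ (g₁.right * g₂.right) g₃.left)) := by
  have h : IsTwistedCocycle φ ρ := hrel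
  exact isCocycle3_of_add_of_invariant hcocy h.add h.invariant
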